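/- arXiv:2212.01433 — 3 statements merged into one kernel-verified Lean document; each statement's English description precedes it below -/
import Mathlib

section
/- In the finite spurious-correlation setting, let c* : 𝒳 → 𝒴 be any deterministic classifier satisfying c*(x) ∈ argmax_{y ∈ 𝒴} ∑_{a ∈ 𝒜} P(y,a | x) / P(y,a) for every x. Then c* maximizes the group-balanced accuracy over all randomized classifiers: for every randomized classifier with conditional prediction probabilities Q(y | x) (Q(·|x) a probability vector for each x), GBA(Q) ≤ GBA(c*), where GBA(Q) = (1/(KL)) ∑_{(y,a)} ∑_x Q(y|x) · P(x | (Y,A)=(y,a)). (Proposition 1) -/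
open Finset

/-- **Proposition 1.** In the finite spurious-correlation setting (finite nonempty input,
label, and attribute spaces; joint pmf `P` with positive input marginals `P(x)` and positive
group priors `P(y,a)`), any deterministic classifier `cstar` satisfying
`cstar x ∈ argmax_y ∑_a P(y,a|x) / P(y,a)` for every `x` maximizes the group-balanced
accuracy `GBA(Q) = (1/(KL)) ∑_{(y,a)} ∑_x Q(y|x) · P(x | (Y,A)=(y,a))` over all randomized
classifiers `Q`. -/
theorem bayes_rule_maximizes_GBA

    {X Y A : Type*} [Fintype X] [Fintype Y] [Fintype A] [DecidableEq Y]
    [Nonempty X] [Nonempty Y] [Nonempty A]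
    (P : X → Y → A → ℝ)
    (hP0 : ∀ x y a, 0 ≤ P x y a)
    (hP1 : ∑ x, ∑ y, ∑ a, P x y a = 1)
    (hPx : ∀ x, 0 < ∑ y, ∑ a, P x y a)
    (hPya : ∀ y a, 0 < ∑ x, P x y a)
    (cstar : X → Y)
    (hc : ∀ x y, (∑ a, (P x y a / (∑ y', ∑ a', P x y' a')) / (∑ x', P x' y a))
        ≤ ∑ a, (P x (cstar x) a / (∑ y', ∑ a', P x y' a')) / (∑ x', P x' (cstar x) a))
    (Q : X → Y → ℝ)
    (hQ0 : ∀ x y, 0 ≤ Q x y)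
    (hQ1 : ∀ x, ∑ y, Q x y = 1) :
    (1 / ((Fintype.card A : ℝ) * (Fintype.card Y : ℝ)))
        * ∑ y, ∑ a, ∑ x, Q x y * (P x y a / (∑ x', P x' y a))
      ≤ (1 / ((Fintype.card A : ℝ) * (Fintype.card Y : ℝ)))
        * ∑ y, ∑ a, ∑ x, (if y = cstar x then (1 : ℝ) else 0) * (P x y a / (∑ x', P x' y a)) := by
  set g : X → Y → ℝ := fun x y => ∑ a, P x y a / (∑ x', P x' y a) with hg_def
  have hg : ∀ x y, g x y ≤ g x (cstar x) := by
    intro x y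
    have hx := hPx x
    have h := hc x y
    have e : ∀ y, (∑ a, (P x y a / (∑ y', ∑ a', P x y' a')) / (∑ x', P x' y a))
        = g x y / (∑ y', ∑ a', P x y' a') := by
      intro y
      rw [hg_def]
      rw [Finset.sum_div]
      refine Finset.sum_congr rfl fun a _ => ?_
      rw [div_div, div_div, mul_comm]
    rw [e y, e (cstar x)] at h
    exact (div_le_div_iff_of_pos_right hx).mp h
  have swap : ∀ (f : X → Y → A → ℝ),
      ∑ y, ∑ a, ∑ x, f x y a = ∑ x, ∑ y, ∑ a, f x y a := by
    intro f
    have : ∑ y, ∑ a, ∑ x, f x y a = ∑ y, ∑ x, ∑ a, f x y a :=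
      Finset.sum_congr rfl fun y _ => Finset.sum_comm
    rw [this, Finset.sum_comm]
  apply mul_le_mul_of_nonneg_left _ (by positivity)
  rw [swap, swap]
  have lhs_eq : ∀ x, ∑ y, ∑ a, Q x y * (P x y a / (∑ x', P x' y a))
      = ∑ y, Q x y * g x y := by
    intro x
    exact Finset.sum_congr rfl fun y _ => by rw [hg_def, Finset.mul_sum]
  have rhs_eq : ∀ x, ∑ y, ∑ a, (if y = cstar x then (1:ℝ) else 0) * (P x y a / (∑ x', P x' y a))
      = g x (cstar x) := by
    intro x
    have : ∀ y, ∑ a, (if y = cstar x then (1:ℝ) else 0) * (P x y a / (∑ x', P x' y a))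
        = (if y = cstar x then g x y else 0) := by
      intro y
      by_cases h : y = cstar x <;> simp [h, hg_def]
    rw [Finset.sum_congr rfl fun y _ => this y]
    simp
  refine Finset.sum_le_sum fun x _ => ?_
  rw [lhs_eq, rhs_eq]
  calc ∑ y, Q x y * g x y ≤ ∑ y, Q x y * g x (cstar x) :=
        Finset.sum_le_sum fun y _ => mul_le_mul_of_nonneg_left (hg x y) (hQ0 x y)
    _ = g x (cstar x) := by rw [← Finset.sum_mul, hQ1, one_mul]
end

section
/- Let L ≥ 1, let p : Fin L → ℝ be a probability vector with p_y > 0 for all y, and let π : Fin L → ℝ with π_y > 0 for all y. Suppose s : Fin L → ℝ satisfies exp(s_y + log π_y) / ∑_{y'} exp(s_{y'} + log π_{y'}) = p_y for every y (i.e., s minimizes the expected logit-corrected loss under label distribution p). Then the set of maximizers of y ↦ s_y equals the set of maximizers of y ↦ p_y / π_y. -/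
open Finset

/-- If the corrected softmax `softmax (s + log pr)` equals the label distribution `p`
(i.e. `s` minimizes the expected logit-corrected loss under `p`), then the set of
maximizers of `y ↦ s y` equals the set of maximizers of `y ↦ p y / pr y`. -/
theorem lc_minimizer_argmax_eq
    (L : ℕ) (hL : 1 ≤ L) (p pr : Fin L → ℝ)
    (hp : ∀ y, 0 < p y) (hpr : ∀ y, 0 < pr y)
    (s : Fin L → ℝ)
    (hs : ∀ y, Real.exp (s y + Real.log (pr y))
          / (∑ y', Real.exp (s y' + Real.log (pr y'))) = p y) :
    {y : Fin L | ∀ y', s y' ≤ s y} = {y : Fin L | ∀ y', p y' / pr y' ≤ p y / pr y} := by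
  set Z := ∑ y', Real.exp (s y' + Real.log (pr y')) with hZ
  have hZpos : 0 < Z := by
    apply Finset.sum_pos (fun i _ => Real.exp_pos _)
    have : Nonempty (Fin L) := Fin.pos_iff_nonempty.mp hL
    exact Finset.univ_nonempty
  have key : ∀ y, p y / pr y = Real.exp (s y) / Z := by
    intro y
    have h : pr y * (Real.exp (s y) / Z) = p y := by
      rw [← hs y, Real.exp_add, Real.exp_log (hpr y)]; ring
    rw [← h, mul_div_cancel_left₀ _ (hpr y).ne']
  ext y
  simp only [Set.mem_setOf_eq]
  constructor
  · intro h y'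
    rw [key, key]
    exact (div_le_div_iff_of_pos_right hZpos).mpr (Real.exp_le_exp.mpr (h y'))
  · intro h y'
    have := h y'
    rw [key, key] at this
    exact Real.exp_le_exp.mp ((div_le_div_iff_of_pos_right hZpos).mp this)
end

section
/- In the finite spurious-correlation setting, additionally assume the attribute is deterministic given the input: for each x ∈ 𝒳 there exists a_x ∈ 𝒜 with P(a_x | x) = 1. Suppose the score function s : 𝒳 → (𝒴 → ℝ) satisfies, for every x and every y, exp(s_y(x) + log P(y, a_x)) / ∑_{y'} exp(s_{y'}(x) + log P(y', a_x)) = P(y | x) (i.e., s minimizes the conditional expected logit-corrected loss at every x). Then any deterministic classifier c with c(x) ∈ argmax_y s_y(x) for all x maximizes the group-balanced accuracy over all randomized classifiers. In other words, minimizing the LC loss is Fisher consistent with maximizing GBA. -/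
open Finset

/-- **Fisher consistency of the LC loss.** In the finite spurious-correlation setting with a
deterministic attribute map `ax` (`P(ax x | x) = 1`), if the score function `s` satisfies,
for every input `x` and label `y`, that the corrected softmax
`exp (s x y + log P(y, ax x)) / ∑_{y'} exp (s x y' + log P(y', ax x))` equals the posterior
`P(y | x)` (i.e. `s` minimizes the conditional expected logit-corrected loss at every `x`),
then any deterministic classifier `c` with `c x ∈ argmax_y s x y` maximizes the
group-balanced accuracy over all randomized classifiers `Q`. -/
theorem lc_loss_fisher_consistent_with_GBA
    {X Y A : Type*} [Fintype X] [Fintype Y] [Fintype A] [DecidableEq Y]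
    [Nonempty X] [Nonempty Y] [Nonempty A]
    (P : X → Y → A → ℝ)
    (hP0 : ∀ x y a, 0 ≤ P x y a)
    (hP1 : ∑ x, ∑ y, ∑ a, P x y a = 1)
    (hPx : ∀ x, 0 < ∑ y, ∑ a, P x y a)
    (hPya : ∀ y a, 0 < ∑ x, P x y a)
    (hPyx : ∀ x y, 0 < (∑ a, P x y a) / (∑ y', ∑ a', P x y' a'))
    (ax : X → A)
    (hax : ∀ x, (∑ y, P x y (ax x)) / (∑ y, ∑ a, P x y a) = 1)
    (s : X → Y → ℝ)
    (hs : ∀ x y,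
        Real.exp (s x y + Real.log (∑ x', P x' y (ax x)))
            / (∑ y', Real.exp (s x y' + Real.log (∑ x', P x' y' (ax x))))
          = (∑ a, P x y a) / (∑ y', ∑ a', P x y' a'))
    (c : X → Y)
    (hc : ∀ x y, s x y ≤ s x (c x))
    (Q : X → Y → ℝ)
    (hQ0 : ∀ x y, 0 ≤ Q x y)
    (hQ1 : ∀ x, ∑ y, Q x y = 1) :
    (1 / ((Fintype.card A : ℝ) * (Fintype.card Y : ℝ)))
        * ∑ y, ∑ a, ∑ x, Q x y * (P x y a / (∑ x', P x' y a))
      ≤ (1 / ((Fintype.card A : ℝ) * (Fintype.card Y : ℝ)))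
        * ∑ y, ∑ a, ∑ x, (if y = c x then (1 : ℝ) else 0) * (P x y a / (∑ x', P x' y a)) := by
  classical
  have hKL : (0:ℝ) ≤ 1 / ((Fintype.card A : ℝ) * (Fintype.card Y : ℝ)) := by positivity
  apply mul_le_mul_of_nonneg_left _ hKL
  -- P x y a = 0 when a ≠ ax x
  have hzero : ∀ x y a, a ≠ ax x → P x y a = 0 := by
    intro x y a hne
    have hx := hPx x
    have h1 : ∑ y', P x y' (ax x) = ∑ y', ∑ a', P x y' a' :=
      (div_eq_one_iff_eq hx.ne').mp (hax x)
    have h2 : ∑ y', ∑ a', P x y' a' = ∑ a', ∑ y', P x y' a' := Finset.sum_comm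
    have hadd := Finset.add_sum_erase Finset.univ (fun a' => ∑ y', P x y' a')
      (Finset.mem_univ (ax x))
    have h3 : ∑ a' ∈ Finset.univ.erase (ax x), ∑ y', P x y' a' = 0 := by
      linarith
    have hnn : ∀ b ∈ Finset.univ.erase (ax x), 0 ≤ ∑ y', P x y' b :=
      fun b _ => Finset.sum_nonneg fun y' _ => hP0 x y' b
    have h4 : ∑ y', P x y' a = 0 :=
      (Finset.sum_eq_zero_iff_of_nonneg hnn).mp h3 a
        (Finset.mem_erase.mpr ⟨hne, Finset.mem_univ a⟩)
    exact (Finset.sum_eq_zero_iff_of_nonneg (fun y' _ => hP0 x y' a)).mp h4 y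
      (Finset.mem_univ y)
  have hsumA : ∀ x y, ∑ a, P x y a = P x y (ax x) := by
    intro x y
    rw [Finset.sum_eq_single (ax x)]
    · intro b _ hb; exact hzero x y b hb
    · intro h; exact absurd (Finset.mem_univ _) h
  -- the per-x weight
  set w : X → Y → ℝ := fun x y => P x y (ax x) / (∑ x', P x' y (ax x)) with hw
  -- w x y = (Px/S) * exp (s x y)
  have hwkey : ∀ x y, w x y =
      (∑ y', ∑ a', P x y' a')
        / (∑ y', Real.exp (s x y' + Real.log (∑ x', P x' y' (ax x))))
        * Real.exp (s x y) := by
    intro x y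
    have hS : 0 < ∑ y', Real.exp (s x y' + Real.log (∑ x', P x' y' (ax x))) :=
      Finset.sum_pos (fun y' _ => Real.exp_pos _) Finset.univ_nonempty
    have hD : 0 < ∑ x', P x' y (ax x) := hPya y (ax x)
    have hx := hPx x
    have h := hs x y
    rw [hsumA x y] at h
    have hE : Real.exp (s x y + Real.log (∑ x', P x' y (ax x)))
        = Real.exp (s x y) * (∑ x', P x' y (ax x)) := by
      rw [Real.exp_add, Real.exp_log hD]
    rw [hE] at h
    rw [div_eq_div_iff hS.ne' hx.ne'] at h
    rw [hw]
    field_simp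
    nlinarith [h]
  have hwle : ∀ x y, w x y ≤ w x (c x) := by
    intro x y
    rw [hwkey x y, hwkey x (c x)]
    have hS : 0 < ∑ y', Real.exp (s x y' + Real.log (∑ x', P x' y' (ax x))) :=
      Finset.sum_pos (fun y' _ => Real.exp_pos _) Finset.univ_nonempty
    have hC : 0 ≤ (∑ y', ∑ a', P x y' a') / (∑ y', Real.exp (s x y' + Real.log (∑ x', P x' y' (ax x)))) :=
      le_of_lt (div_pos (hPx x) hS)
    exact mul_le_mul_of_nonneg_left (Real.exp_le_exp.mpr (hc x y)) hC
  -- collapse the a-sum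
  have hr : ∀ (g : X → Y → ℝ),
      (∑ y, ∑ a, ∑ x, g x y * (P x y a / (∑ x', P x' y a)))
        = ∑ x, ∑ y, g x y * w x y := by
    intro g
    have step1 : (∑ y, ∑ a, ∑ x, g x y * (P x y a / (∑ x', P x' y a)))
        = ∑ x, ∑ y, ∑ a, g x y * (P x y a / (∑ x', P x' y a)) := by
      calc (∑ y, ∑ a, ∑ x, g x y * (P x y a / (∑ x', P x' y a)))
          = ∑ y, ∑ x, ∑ a, g x y * (P x y a / (∑ x', P x' y a)) :=
            Finset.sum_congr rfl fun y _ => Finset.sum_comm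
        _ = ∑ x, ∑ y, ∑ a, g x y * (P x y a / (∑ x', P x' y a)) := Finset.sum_comm
    rw [step1]
    refine Finset.sum_congr rfl fun x _ => Finset.sum_congr rfl fun y _ => ?_
    exact Finset.sum_eq_single (ax x)
      (fun b _ hb => by rw [hzero x y b hb, zero_div, mul_zero])
      (fun h => absurd (Finset.mem_univ _) h)
  rw [hr Q, hr (fun x y => if y = c x then (1:ℝ) else 0)]
  refine Finset.sum_le_sum fun x _ => ?_
  have hwnn : ∀ y, 0 ≤ w x y := fun y =>
    div_nonneg (hP0 x y (ax x)) (le_of_lt (hPya y (ax x)))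
  calc ∑ y, Q x y * w x y
      ≤ ∑ y, Q x y * w x (c x) :=
        Finset.sum_le_sum fun y _ =>
          mul_le_mul_of_nonneg_left (hwle x y) (hQ0 x y)
    _ = w x (c x) := by rw [← Finset.sum_mul, hQ1 x, one_mul]
    _ = ∑ y, (if y = c x then (1:ℝ) else 0) * w x y := by
        simp
end
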